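/- arXiv:2409.07032 — 2 statements merged into one kernel-verified Lean document; each statement's English description precedes it below -/
import Mathlib

section
/- Let f be a probability density supported on [-1,1] with c_d \le f \le C_d on [-1,1], and p(x,t) = (\varphi_t * f)(x). Then for t \le 1 and x > 1, p(x,t) is comparable, up to universal constant factors, to P((x-1)/\sqrt{t} \le Z \le (x+1)/\sqrt{t}) for Z ~ N(0,1); moreover P(Z \ge (x+1)/\sqrt{t}) / P(Z \ge (x-1)/\sqrt{t}) \le 0.67 for all such x and t. -/
open MeasureTheory Real

/-- Density of `N(0,t)`. -/
noncomputable def gaussDensity (t x : ℝ) : ℝ :=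
  (Real.sqrt (2 * Real.pi * t))⁻¹ * Real.exp (-x ^ 2 / (2 * t))

/-- Standard Gaussian density. -/
noncomputable def stdGauss (x : ℝ) : ℝ := gaussDensity 1 x

lemma gaussDensity_nonneg (t x : ℝ) : 0 ≤ gaussDensity t x := by
  unfold gaussDensity; positivity

lemma stdGauss_nonneg (x : ℝ) : 0 ≤ stdGauss x := gaussDensity_nonneg 1 x

lemma stdGauss_eq (x : ℝ) :
    stdGauss x = (Real.sqrt (2 * Real.pi))⁻¹ * Real.exp (-(1/2) * x ^ 2) := by
  unfold stdGauss gaussDensity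
  rw [mul_one]
  ring_nf

lemma stdGauss_integrable : Integrable stdGauss := by
  have h : Integrable (fun x : ℝ => Real.exp (-(1/2) * x ^ 2)) := by
    simpa [sq] using integrable_exp_neg_mul_sq (b := (1/2 : ℝ)) (by norm_num)
  have := h.const_mul (Real.sqrt (2 * Real.pi))⁻¹
  refine this.congr ?_
  filter_upwards with y
  rw [stdGauss_eq]

lemma gauss_cont (t x : ℝ) : Continuous fun μ : ℝ => gaussDensity t (x - μ) := by
  unfold gaussDensity; fun_prop

lemma stdGauss_scale (t z : ℝ) (ht : 0 < t) :
    Real.sqrt t * gaussDensity t (Real.sqrt t * z) = stdGauss z := by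
  have hst : (0:ℝ) < Real.sqrt t := Real.sqrt_pos.2 ht
  unfold stdGauss gaussDensity
  rw [mul_pow, sq_sqrt ht.le, Real.sqrt_mul (by positivity) t]
  have : -(t * z ^ 2) / (2 * t) = -z ^ 2 / (2 * 1) := by
    field_simp
  rw [this]
  field_simp

lemma change_of_var (t x : ℝ) (ht : 0 < t) :
    (∫ z in Set.Icc ((x - 1) / Real.sqrt t) ((x + 1) / Real.sqrt t), stdGauss z)
      = ∫ μ in Set.Icc (-1 : ℝ) 1, gaussDensity t (x - μ) := by
  have hst : (0:ℝ) < Real.sqrt t := Real.sqrt_pos.2 ht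
  have hab : (x - 1) / Real.sqrt t ≤ (x + 1) / Real.sqrt t := by
    gcongr
    · linarith
  rw [MeasureTheory.integral_Icc_eq_integral_Ioc, MeasureTheory.integral_Icc_eq_integral_Ioc,
    ← intervalIntegral.integral_of_le hab, ← intervalIntegral.integral_of_le (by linarith : (-1:ℝ) ≤ 1)]
  have h1 : ∀ z, stdGauss z = Real.sqrt t * gaussDensity t (Real.sqrt t * z) :=
    fun z => (stdGauss_scale t z ht).symm
  calc (∫ z in ((x - 1) / Real.sqrt t)..((x + 1) / Real.sqrt t), stdGauss z)
      = ∫ z in ((x - 1) / Real.sqrt t)..((x + 1) / Real.sqrt t),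
          Real.sqrt t * gaussDensity t (Real.sqrt t * z) := by
        simp_rw [← h1]
    _ = Real.sqrt t * ∫ z in ((x - 1) / Real.sqrt t)..((x + 1) / Real.sqrt t),
          gaussDensity t (Real.sqrt t * z) := intervalIntegral.integral_const_mul _ _
    _ = Real.sqrt t * ((Real.sqrt t)⁻¹ • ∫ u in (Real.sqrt t * ((x - 1) / Real.sqrt t))..(Real.sqrt t * ((x + 1) / Real.sqrt t)), gaussDensity t u) := by
        rw [intervalIntegral.integral_comp_mul_left _ hst.ne']
    _ = ∫ u in (x - 1)..(x + 1), gaussDensity t u := by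
        rw [mul_div_cancel₀ _ hst.ne', mul_div_cancel₀ _ hst.ne', smul_eq_mul,
          ← mul_assoc, mul_inv_cancel₀ hst.ne', one_mul]
    _ = ∫ μ in (-1:ℝ)..1, gaussDensity t (x - μ) := by
        rw [intervalIntegral.integral_comp_sub_left (fun u => gaussDensity t u) x]
        norm_num

lemma tail_bound (a b : ℝ) (ha : 0 ≤ a) (hb : a + 2 ≤ b) :
    (∫ z in Set.Ici b, stdGauss z) ≤ 0.67 * ∫ z in Set.Ici a, stdGauss z := by
  have h1 : (∫ z in Set.Ici b, stdGauss z) ≤ ∫ z in Set.Ici (a + 2), stdGauss z := by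
    apply setIntegral_mono_set (stdGauss_integrable.integrableOn)
    · filter_upwards with z using stdGauss_nonneg z
    · exact HasSubset.Subset.eventuallyLE (Set.Ici_subset_Ici.2 hb)
  have h2 : (∫ z in Set.Ici (a + 2), stdGauss z) = ∫ z in Set.Ici a, stdGauss (z + 2) := by
    rw [← integral_indicator measurableSet_Ici, ← integral_indicator measurableSet_Ici]
    rw [← integral_add_right_eq_self (fun z => (Set.Ici (a+2)).indicator stdGauss z) 2]
    congr 1
    ext z
    by_cases hz : a ≤ z
    · rw [Set.indicator_of_mem (by simpa using hz), Set.indicator_of_mem (by simp only [Set.mem_Ici]; linarith)]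
    · rw [Set.indicator_of_notMem (by simpa using hz), Set.indicator_of_notMem (by simp only [Set.mem_Ici]; intro h; exact hz (by linarith))]
  have h3 : (∫ z in Set.Ici a, stdGauss (z + 2)) ≤ ∫ z in Set.Ici a, Real.exp (-2) * stdGauss z := by
    apply setIntegral_mono_on
    · exact (stdGauss_integrable.comp_add_right 2).integrableOn
    · exact (stdGauss_integrable.const_mul _).integrableOn
    · exact measurableSet_Ici
    · intro z hz
      have hz0 : 0 ≤ z := le_trans ha hz
      rw [stdGauss_eq, stdGauss_eq, mul_comm (Real.exp (-2)) _, mul_assoc, ← Real.exp_add]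
      apply mul_le_mul_of_nonneg_left _ (by positivity)
      apply Real.exp_le_exp.2
      nlinarith
  have h4 : (∫ z in Set.Ici a, Real.exp (-2) * stdGauss z)
      = Real.exp (-2) * ∫ z in Set.Ici a, stdGauss z := by
    rw [MeasureTheory.integral_const_mul]
  have h5 : Real.exp (-2) ≤ 0.67 := by
    rw [Real.exp_neg]
    have h3 : (3:ℝ) ≤ Real.exp 2 := by
      have := Real.add_one_le_exp (2:ℝ); linarith
    rw [inv_le_comm₀ (by linarith) (by norm_num)]; norm_num
    linarith
  have hnn : 0 ≤ ∫ z in Set.Ici a, stdGauss z :=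
    setIntegral_nonneg measurableSet_Ici fun z _ => stdGauss_nonneg z
  calc (∫ z in Set.Ici b, stdGauss z) ≤ Real.exp (-2) * ∫ z in Set.Ici a, stdGauss z := by
        rw [← h4]; exact h1.trans (h2 ▸ h3)
    _ ≤ 0.67 * ∫ z in Set.Ici a, stdGauss z := mul_le_mul_of_nonneg_right h5 hnn

/-- If `f` is a probability density supported on `[-1,1]` with `c_d ≤ f ≤ C_d` there, then for
`0 < t ≤ 1` and `x > 1`, the diffused density `p(x,t) = (φ_t * f)(x)` is comparable (up to the
constant factors `c_d`, `C_d`) to `P((x-1)/√t ≤ Z ≤ (x+1)/√t)`; moreover the Gaussian tail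
ratio satisfies `P(Z ≥ (x+1)/√t) ≤ 0.67 · P(Z ≥ (x-1)/√t)`. -/
theorem diffused_density_tail_comparison
    (f : ℝ → ℝ) (c_d C_d : ℝ) (hc : 0 < c_d) (hcC : c_d ≤ C_d)
    (hf0 : ∀ x, 0 ≤ f x) (hmeas : Measurable f)
    (hsupp : ∀ x, x ∉ Set.Icc (-1 : ℝ) 1 → f x = 0)
    (hfint : ∫ x, f x = 1)
    (hbounds : ∀ x ∈ Set.Icc (-1 : ℝ) 1, c_d ≤ f x ∧ f x ≤ C_d)
    (t x : ℝ) (ht0 : 0 < t) (ht1 : t ≤ 1) (hx : 1 < x) :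
    c_d * (∫ z in Set.Icc ((x - 1) / Real.sqrt t) ((x + 1) / Real.sqrt t), stdGauss z)
        ≤ ∫ μ, gaussDensity t (x - μ) * f μ ∧
    (∫ μ, gaussDensity t (x - μ) * f μ)
        ≤ C_d * (∫ z in Set.Icc ((x - 1) / Real.sqrt t) ((x + 1) / Real.sqrt t), stdGauss z) ∧
    (∫ z in Set.Ici ((x + 1) / Real.sqrt t), stdGauss z)
        ≤ 0.67 * ∫ z in Set.Ici ((x - 1) / Real.sqrt t), stdGauss z := by
  have hst : (0:ℝ) < Real.sqrt t := Real.sqrt_pos.2 ht0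
  have hG := gauss_cont t x
  have hfC : ∀ μ, f μ ≤ C_d := by
    intro μ
    by_cases hμ : μ ∈ Set.Icc (-1:ℝ) 1
    · exact (hbounds μ hμ).2
    · rw [hsupp μ hμ]; linarith
  have hrw : (∫ μ, gaussDensity t (x - μ) * f μ)
      = ∫ μ in Set.Icc (-1:ℝ) 1, gaussDensity t (x - μ) * f μ :=
    (setIntegral_eq_integral_of_forall_compl_eq_zero
      (fun μ hμ => by rw [hsupp μ hμ, mul_zero])).symm
  have hGint : IntegrableOn (fun μ => gaussDensity t (x - μ)) (Set.Icc (-1:ℝ) 1) :=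
    hG.integrableOn_Icc
  have hGfint : IntegrableOn (fun μ => gaussDensity t (x - μ) * f μ) (Set.Icc (-1:ℝ) 1) := by
    apply Integrable.mono' (hGint.const_mul C_d)
    · exact (hG.aestronglyMeasurable.mul hmeas.aestronglyMeasurable).restrict
    · filter_upwards with μ
      have h0 := gaussDensity_nonneg t (x - μ)
      rw [Real.norm_eq_abs, abs_of_nonneg (mul_nonneg h0 (hf0 μ))]
      nlinarith [hfC μ, hf0 μ]
  have hcov := change_of_var t x ht0
  refine ⟨?_, ?_, ?_⟩
  · rw [hrw, hcov, ← MeasureTheory.integral_const_mul]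
    apply setIntegral_mono_on (hGint.const_mul c_d) hGfint measurableSet_Icc
    intro μ hμ
    nlinarith [gaussDensity_nonneg t (x - μ), (hbounds μ hμ).1]
  · rw [hrw, hcov, ← MeasureTheory.integral_const_mul]
    apply setIntegral_mono_on hGfint (hGint.const_mul C_d) measurableSet_Icc
    intro μ hμ
    nlinarith [gaussDensity_nonneg t (x - μ), (hbounds μ hμ).2, hf0 μ]
  · have ha : 0 ≤ (x - 1) / Real.sqrt t := div_nonneg (by linarith) hst.le
    have hb : (x - 1) / Real.sqrt t + 2 ≤ (x + 1) / Real.sqrt t := by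
      have h2 : (2:ℝ) ≤ 2 / Real.sqrt t := by
        rw [le_div_iff₀ hst]
        nlinarith [Real.sqrt_le_one.2 ht1]
      have hsplit : (x + 1) / Real.sqrt t - (x - 1) / Real.sqrt t = 2 / Real.sqrt t := by
        field_simp
        ring
      linarith
    exact tail_bound _ _ ha hb
end

section
/- For every t > 0 and every x with |x| \le 1 + \sqrt{t}, one has |(\int_{-1}^1 \mu^2 \varphi_t(x-\mu) d\mu)(\int_{-1}^1 \varphi_t(x-\mu) d\mu) - (\int_{-1}^1 \mu \varphi_t(x-\mu) d\mu)^2|^2 \ge (c/t^2) e^{-2(2+\sqrt{t})^2/t} for some universal constant c > 0. -/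
/-!
With weights `w = φ_t(x - ·)` on `[-1, 1]` and moments `mₖ = ∫ μᵏ w`, the determinant
`m₂ m₀ - m₁²` equals `m₀ ∫ (μ - m₁/m₀)² w`, i.e. `m₀²` times the variance of the normalised
weight. For `|x| ≤ 1 + √t` the weight is at least `m = φ_t(2 + √t)` on `[-1, 1]`, so `m₀ ≥ 2m`
and the variance integral is at least `m ∫ (μ - c)² ≥ 2m/3`. Hence the determinant is at least
`4m²/3`, and squaring gives the claim with `c = 4/(9π²)`.
-/

open MeasureTheory Real

theorem continuous_gaussDensity (t : ℝ) : Continuous (gaussDensity t) := by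
  unfold gaussDensity
  fun_prop

theorem gaussDensity_ge_of_abs_le {t y r : ℝ} (ht : 0 < t) (hy : |y| ≤ r) :
    (Real.sqrt (2 * π * t))⁻¹ * Real.exp (-r ^ 2 / (2 * t)) ≤ gaussDensity t y := by
  unfold gaussDensity
  have hyr : y ^ 2 ≤ r ^ 2 := sq_le_sq' (abs_le.mp hy).1 (abs_le.mp hy).2
  gcongr

theorem integral_sub_sq_mul {ρ : Measure ℝ} {w : ℝ → ℝ} (a : ℝ) (h0 : Integrable w ρ)
    (h1 : Integrable (fun x ↦ x * w x) ρ) (h2 : Integrable (fun x ↦ x ^ 2 * w x) ρ) :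
    ∫ x, (x - a) ^ 2 * w x ∂ρ =
      ∫ x, x ^ 2 * w x ∂ρ - 2 * a * ∫ x, x * w x ∂ρ + a ^ 2 * ∫ x, w x ∂ρ := by
  have hexpand : (fun x ↦ (x - a) ^ 2 * w x) =
      fun x ↦ x ^ 2 * w x - 2 * a * (x * w x) + a ^ 2 * w x := by
    ext x; ring
  rw [hexpand, integral_add ?_ (h0.const_mul _), integral_sub h2 (h1.const_mul _),
    integral_const_mul, integral_const_mul]
  exact h2.sub (h1.const_mul _)

theorem integral_Icc_sub_sq_ge {a b : ℝ} (hab : a ≤ b) (c : ℝ) :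
    (b - a) ^ 3 / 12 ≤ ∫ x in Set.Icc a b, (x - c) ^ 2 := by
  rw [integral_Icc_eq_integral_Ioc, ← intervalIntegral.integral_of_le hab,
    intervalIntegral.integral_comp_sub_right (fun x ↦ x ^ 2), integral_pow]
  -- the excess is `(b - a) (a + b - 2c)² / 4`
  nlinarith [mul_nonneg (sub_nonneg.mpr hab) (sq_nonneg (a + b - 2 * c))]

theorem setIntegral_Icc_ge_of_le {a b m : ℝ} (hab : a ≤ b) {w : ℝ → ℝ}
    (hw : IntegrableOn w (Set.Icc a b)) (hm : ∀ x ∈ Set.Icc a b, m ≤ w x) :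
    m * (b - a) ≤ ∫ x in Set.Icc a b, w x := by
  have := setIntegral_mono_on (integrableOn_const (by simp)) hw measurableSet_Icc hm
  rwa [setIntegral_const, measureReal_def, Real.volume_Icc, ENNReal.toReal_ofReal (by linarith),
    smul_eq_mul, mul_comm] at this

theorem moment_det_Icc_ge {a b m : ℝ} (hab : a < b) (hm : 0 < m) {w : ℝ → ℝ}
    (hw : IntegrableOn w (Set.Icc a b)) (hmw : ∀ x ∈ Set.Icc a b, m ≤ w x) :
    m ^ 2 * (b - a) ^ 4 / 12 ≤
      (∫ x in Set.Icc a b, x ^ 2 * w x) * (∫ x in Set.Icc a b, w x) -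
        (∫ x in Set.Icc a b, x * w x) ^ 2 := by
  have h1 : IntegrableOn (fun x ↦ x * w x) (Set.Icc a b) :=
    hw.continuousOn_mul continuousOn_id isCompact_Icc
  have h2 : IntegrableOn (fun x ↦ x ^ 2 * w x) (Set.Icc a b) :=
    hw.continuousOn_mul (continuousOn_pow 2) isCompact_Icc
  set m0 := ∫ x in Set.Icc a b, w x
  set m1 := ∫ x in Set.Icc a b, x * w x
  set m2 := ∫ x in Set.Icc a b, x ^ 2 * w x
  have hm0 : m * (b - a) ≤ m0 := setIntegral_Icc_ge_of_le hab.le hw hmw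
  have hm0_pos : 0 < m0 := lt_of_lt_of_le (mul_pos hm (sub_pos.mpr hab)) hm0
  set c := m1 / m0
  have hvar : m * ((b - a) ^ 3 / 12) ≤ ∫ x in Set.Icc a b, (x - c) ^ 2 * w x := by
    calc m * ((b - a) ^ 3 / 12) ≤ m * ∫ x in Set.Icc a b, (x - c) ^ 2 :=
          mul_le_mul_of_nonneg_left (integral_Icc_sub_sq_ge hab.le c) hm.le
      _ = ∫ x in Set.Icc a b, (x - c) ^ 2 * m := by rw [integral_mul_const, mul_comm]
      _ ≤ ∫ x in Set.Icc a b, (x - c) ^ 2 * w x :=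
          setIntegral_mono_on (Continuous.integrableOn_Icc (by fun_prop))
            (hw.continuousOn_mul (by fun_prop) isCompact_Icc) measurableSet_Icc
            fun x hx ↦ mul_le_mul_of_nonneg_left (hmw x hx) (sq_nonneg _)
  have hdet : m2 * m0 - m1 ^ 2 = m0 * ∫ x in Set.Icc a b, (x - c) ^ 2 * w x := by
    rw [integral_sub_sq_mul c hw h1 h2]
    change m2 * m0 - m1 ^ 2 = m0 * (m2 - 2 * (m1 / m0) * m1 + (m1 / m0) ^ 2 * m0)
    field_simp
    ring
  rw [hdet]
  calc m ^ 2 * (b - a) ^ 4 / 12 = (m * (b - a)) * (m * ((b - a) ^ 3 / 12)) := by ring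
    _ ≤ m0 * ∫ x in Set.Icc a b, (x - c) ^ 2 * w x :=
        mul_le_mul hm0 hvar (by have := sub_pos.mpr hab; positivity) hm0_pos.le

/-- There is a universal constant `c > 0` such that for every `t > 0` and every `x` with
`|x| ≤ 1 + √t`,
`|(∫ μ² φ_t(x-μ))(∫ φ_t(x-μ)) - (∫ μ φ_t(x-μ))²|² ≥ (c/t²) e^{-2(2+√t)²/t}`. -/
theorem determinant_lower_bound :
    ∃ c : ℝ, 0 < c ∧ ∀ t x : ℝ, 0 < t → |x| ≤ 1 + Real.sqrt t →
      (c / t ^ 2) * Real.exp (-2 * (2 + Real.sqrt t) ^ 2 / t)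
        ≤ ((∫ μ in Set.Icc (-1 : ℝ) 1, μ ^ 2 * gaussDensity t (x - μ)) *
            (∫ μ in Set.Icc (-1 : ℝ) 1, gaussDensity t (x - μ)) -
          (∫ μ in Set.Icc (-1 : ℝ) 1, μ * gaussDensity t (x - μ)) ^ 2) ^ 2 := by
  refine ⟨4 / (9 * π ^ 2), by positivity, fun t x ht hx ↦ ?_⟩
  set m := (Real.sqrt (2 * π * t))⁻¹ * Real.exp (-(2 + Real.sqrt t) ^ 2 / (2 * t))
  have hm : 0 < m := by positivity
  have hmφ : ∀ μ ∈ Set.Icc (-1 : ℝ) 1, m ≤ gaussDensity t (x - μ) := fun μ hμ ↦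
    gaussDensity_ge_of_abs_le ht <| by
      calc |x - μ| ≤ |x| + |μ| := abs_sub _ _
        _ ≤ (1 + Real.sqrt t) + 1 := add_le_add hx (abs_le.mpr hμ)
        _ = 2 + Real.sqrt t := by ring
  have hdet := moment_det_Icc_ge (by norm_num) hm
    ((continuous_gaussDensity t).comp (continuous_sub_left x)).integrableOn_Icc hmφ
  have hm4 : m ^ 4 = (4 * π ^ 2 * t ^ 2)⁻¹ * Real.exp (-2 * (2 + Real.sqrt t) ^ 2 / t) := by
    rw [mul_pow, inv_pow, show Real.sqrt (2 * π * t) ^ 4 = (2 * π * t) ^ 2 by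
      rw [show 4 = 2 * 2 from rfl, pow_mul, Real.sq_sqrt (by positivity)], ← Real.exp_nat_mul]
    congr 1
    · ring
    · congr 1; field_simp; ring
  calc (4 / (9 * π ^ 2) / t ^ 2) * Real.exp (-2 * (2 + Real.sqrt t) ^ 2 / t)
      = (m ^ 2 * (1 - (-1)) ^ 4 / 12) ^ 2 := by
        rw [show (m ^ 2 * (1 - (-1)) ^ 4 / 12) ^ 2 = 16 / 9 * m ^ 4 by ring, hm4]
        field_simp
        ring
    _ ≤ _ := pow_le_pow_left₀ (by positivity) hdet 2
end
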